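/- arXiv:2411.08702 — 2 statements merged into one kernel-verified Lean document; each statement's English description precedes it below -/
import Mathlib

section
/- In Case 2 of the Uzawa convergence proof: assume ρ > 0, β := 2γ − ρ < 0, and |β| C_tr² < 2 min{σ_min, 1}, and that the identity ‖λ^{k+1}−λ*‖² = ‖λ^k−λ*‖² − 2ρ‖A^{1/2}∇e^k‖² − 2ρ‖e^k‖²_{L²(Ω)} + ρ|β|‖e^k‖²_{L²(∂Ω)} holds with the trace inequality ‖e^k‖_{L²(∂Ω)} ≤ C_tr‖e^k‖_{H¹(Ω)}. Then with α := ρ(2 min{σ_min,1} − |β| C_tr²) > 0 one has α‖e^k‖²_{H¹(Ω)} ≤ ‖λ^k−λ*‖² − ‖λ^{k+1}−λ*‖² for all k, and consequently e^k → 0 in H¹(Ω). -/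
open Filter

/-- Case 2 (`β = 2γ − ρ < 0`) of the Dirichlet Uzawa convergence proof (abstract form):
under the identity
`‖λ^{k+1}−λ*‖² = ‖λ^k−λ*‖² − 2ρ‖A^{1/2}∇e^k‖² − 2ρ‖e^k‖²_{L²(Ω)} + ρ|β|‖e^k‖²_{L²(∂Ω)}`,
the trace inequality `‖e^k‖_{L²(∂Ω)} ≤ C_tr‖e^k‖_{H¹(Ω)}`, and `|β| C_tr² < 2 min{σ_min,1}`,
one has with `α := ρ(2 min{σ_min,1} − |β| C_tr²) > 0` the estimate
`α‖e^k‖²_{H¹(Ω)} ≤ ‖λ^k−λ*‖² − ‖λ^{k+1}−λ*‖²` for all `k`, and `e^k → 0` in `H¹(Ω)`. -/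
theorem dirichlet_uzawa_case2
    (V L2 W L2b : Type*)
    [NormedAddCommGroup V] [InnerProductSpace ℝ V]
    [NormedAddCommGroup L2] [InnerProductSpace ℝ L2]
    [NormedAddCommGroup W] [InnerProductSpace ℝ W]
    [NormedAddCommGroup L2b] [InnerProductSpace ℝ L2b]
    (D : V →L[ℝ] W) (S : V →L[ℝ] W) (ι : V →L[ℝ] L2) (tr2 : V →L[ℝ] L2b)
    (σmin : ℝ) (hσmin : 0 < σmin)
    (hS : ∀ v : V, σmin * ‖D v‖ ^ 2 ≤ ‖S v‖ ^ 2)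
    (hnorm : ∀ v : V, ‖v‖ ^ 2 = ‖ι v‖ ^ 2 + ‖D v‖ ^ 2)
    (Ctr : ℝ) (hCtr : 0 < Ctr)
    (htrace : ∀ k : ℕ, ∀ e : V, ‖tr2 e‖ ≤ Ctr * ‖e‖)
    (ρ γ β : ℝ) (hρ : 0 < ρ) (hβdef : β = 2 * γ - ρ) (hβ : β < 0)
    (hsmall : |β| * Ctr ^ 2 < 2 * min σmin 1)
    (Λ : ℕ → ℝ) (hΛ : ∀ k, 0 ≤ Λ k)   -- Λ k = ‖λ^k − λ*‖²_{H^{-1/2}(∂Ω)}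
    (e : ℕ → V)                        -- e^k = u^k − u*
    (hid : ∀ k, Λ (k + 1) =
      Λ k - 2 * ρ * ‖S (e k)‖ ^ 2 - 2 * ρ * ‖ι (e k)‖ ^ 2
        + ρ * |β| * ‖tr2 (e k)‖ ^ 2) :
    (0 < ρ * (2 * min σmin 1 - |β| * Ctr ^ 2)) ∧
      (∀ k, ρ * (2 * min σmin 1 - |β| * Ctr ^ 2) * ‖e k‖ ^ 2 ≤ Λ k - Λ (k + 1)) ∧
      Tendsto (fun k => ‖e k‖) atTop (nhds 0) := by
  obtain ⟨m, hm⟩ : ∃ m, min σmin 1 = m := ⟨_, rfl⟩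
  rw [hm]
  have hm0 : 0 < m := hm ▸ lt_min hσmin one_pos
  rw [hm] at hsmall
  have hα : 0 < ρ * (2 * m - |β| * Ctr ^ 2) :=
    mul_pos hρ (by linarith)
  have key : ∀ k, ρ * (2 * m - |β| * Ctr ^ 2) * ‖e k‖ ^ 2 ≤ Λ k - Λ (k + 1) := by
    intro k
    have h1 : σmin * ‖D (e k)‖ ^ 2 ≤ ‖S (e k)‖ ^ 2 := hS (e k)
    have h2 : ‖e k‖ ^ 2 = ‖ι (e k)‖ ^ 2 + ‖D (e k)‖ ^ 2 := hnorm (e k)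
    have h3 : ‖tr2 (e k)‖ ^ 2 ≤ Ctr ^ 2 * ‖e k‖ ^ 2 := by
      have := htrace k (e k)
      have h4 : ‖tr2 (e k)‖ ^ 2 ≤ (Ctr * ‖e k‖) ^ 2 :=
        pow_le_pow_left₀ (norm_nonneg _) this 2
      calc ‖tr2 (e k)‖ ^ 2 ≤ (Ctr * ‖e k‖) ^ 2 := h4
        _ = Ctr ^ 2 * ‖e k‖ ^ 2 := by ring
    have hmι : m * ‖ι (e k)‖ ^ 2 ≤ ‖ι (e k)‖ ^ 2 := by
      nlinarith [hm ▸ min_le_right σmin 1, sq_nonneg (‖ι (e k)‖)]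
    have hmD : m * ‖D (e k)‖ ^ 2 ≤ σmin * ‖D (e k)‖ ^ 2 := by
      nlinarith [hm ▸ min_le_left σmin 1, sq_nonneg (‖D (e k)‖)]
    have habs : 0 < |β| := abs_pos.mpr (ne_of_lt hβ)
    have hid' := hid k
    have h2' : ρ * m * ‖e k‖ ^ 2 = ρ * m * ‖ι (e k)‖ ^ 2 + ρ * m * ‖D (e k)‖ ^ 2 := by
      rw [h2]; ring
    nlinarith [mul_le_mul_of_nonneg_left h3 (mul_nonneg hρ.le habs.le),
      mul_le_mul_of_nonneg_left h1 hρ.le,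
      mul_le_mul_of_nonneg_left hmι hρ.le,
      mul_le_mul_of_nonneg_left hmD hρ.le, h2']
  refine ⟨hα, key, ?_⟩
  have hanti : Antitone Λ := antitone_nat_of_succ_le fun k => by
    have := key k
    nlinarith [sq_nonneg (‖e k‖)]
  have hbdd : BddBelow (Set.range Λ) := ⟨0, fun x ⟨k, hk⟩ => hk ▸ hΛ k⟩
  have hconv : Tendsto Λ atTop (nhds (⨅ k, Λ k)) :=
    tendsto_atTop_ciInf hanti hbdd
  have hdiff : Tendsto (fun k => Λ k - Λ (k + 1)) atTop (nhds 0) := by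
    have h2 : Tendsto (fun k => Λ (k + 1)) atTop (nhds (⨅ k, Λ k)) :=
      hconv.comp (tendsto_add_atTop_nat 1)
    simpa using hconv.sub h2
  have hsq : Tendsto (fun k => ‖e k‖ ^ 2) atTop (nhds 0) := by
    apply squeeze_zero (fun k => sq_nonneg _) (fun k => ?_)
      (by simpa using hdiff.const_mul (ρ * (2 * m - |β| * Ctr ^ 2))⁻¹)
    have := key k
    rw [← le_div_iff₀' hα] at this
    simpa [div_eq_inv_mul] using this
  have : Tendsto (fun k => Real.sqrt (‖e k‖ ^ 2)) atTop (nhds (Real.sqrt 0)) :=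
    (Real.continuous_sqrt.continuousAt).tendsto.comp hsq
  simpa [Real.sqrt_sq (norm_nonneg _)] using this
end

section
/- (PINNs Lagrangian error identity) Let ℒu = −div(A∇u) + u, and let (u*, λ*) be a saddle point of L_R(u,λ) = ½‖ℒu − f‖²_{L²(Ω)} + (γ/2)‖u−g‖²_{L²(∂Ω)} − ⟨λ, u−g⟩ over H²(Ω) × H^{−3/2}(∂Ω), and u^k the minimizer of u ↦ L_R(u, λ^k). Then ‖ℒ(u^k − u*)‖²_{L²(Ω)} + γ‖u^k − u*‖²_{L²(∂Ω)} = ⟨λ^k − λ*, u^k − u*⟩, where ⟨·,·⟩ is the H^{−3/2}(∂Ω) × H^{3/2}(∂Ω) pairing. -/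
open scoped RealInnerProductSpace

section

variable {V H : Type*} [NormedAddCommGroup V] [InnerProductSpace ℝ V]
  [NormedAddCommGroup H] [InnerProductSpace ℝ H]

theorem inner_map_sub_sub_inner_map_sub (A : V →L[ℝ] H) (f : H) (u v φ : V) :
    ⟪A u - f, A φ⟫ - ⟪A v - f, A φ⟫ = ⟪A (u - v), A φ⟫ := by
  rw [← inner_sub_left, sub_sub_sub_cancel_right, map_sub]

theorem euler_lagrange_sub {B L2b : Type*}
    [NormedAddCommGroup B] [InnerProductSpace ℝ B]
    [NormedAddCommGroup L2b] [InnerProductSpace ℝ L2b]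
    (Lop : V →L[ℝ] H) (trh : V →L[ℝ] B) (j : B →L[ℝ] L2b) (f : H) (g : B) (γ : ℝ)
    (u v : V) (μ ν : StrongDual ℝ B)
    (hu : ∀ φ : V, ⟪Lop u - f, Lop φ⟫ + γ * ⟪j (trh u) - j g, j (trh φ)⟫ = μ (trh φ))
    (hv : ∀ φ : V, ⟪Lop v - f, Lop φ⟫ + γ * ⟪j (trh v) - j g, j (trh φ)⟫ = ν (trh φ))
    (φ : V) :
    ⟪Lop (u - v), Lop φ⟫ + γ * ⟪j (trh (u - v)), j (trh φ)⟫ = (μ - ν) (trh φ) := by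
  have hboundary := inner_map_sub_sub_inner_map_sub (j ∘L trh) (j g) u v φ
  simp only [ContinuousLinearMap.comp_apply] at hboundary
  rw [← inner_map_sub_sub_inner_map_sub Lop f, ← hboundary, sub_apply,
    ← hu, ← hv]
  ring

end

theorem pinns_lagrangian_error_identity_general
    (V2 L2 L2b Bh : Type*)
    [NormedAddCommGroup V2] [InnerProductSpace ℝ V2]
    [NormedAddCommGroup L2] [InnerProductSpace ℝ L2]
    [NormedAddCommGroup L2b] [InnerProductSpace ℝ L2b]
    [NormedAddCommGroup Bh] [InnerProductSpace ℝ Bh]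
    (Lop : V2 →L[ℝ] L2)    -- u ↦ ℒu = −div(A∇u) + u
    (trh : V2 →L[ℝ] Bh)    -- trace operator H²(Ω) → H^{3/2}(∂Ω)
    (j : Bh →L[ℝ] L2b)     -- embedding H^{3/2}(∂Ω) ↪ L²(∂Ω)
    (f : L2) (g : Bh) (γ : ℝ)
    (ustar uk : V2) (lamstar lamk : StrongDual ℝ Bh)
    -- Euler–Lagrange conditions for the saddle point (u*, λ*)
    (hELstar : ∀ φ : V2,
      ⟪Lop ustar - f, Lop φ⟫ + γ * ⟪j (trh ustar) - j g, j (trh φ)⟫ = lamstar (trh φ))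
    -- Euler–Lagrange conditions for u^k minimizing L_R(·, λ^k)
    (hELk : ∀ φ : V2,
      ⟪Lop uk - f, Lop φ⟫ + γ * ⟪j (trh uk) - j g, j (trh φ)⟫ = lamk (trh φ)) :
    ‖Lop (uk - ustar)‖ ^ 2 + γ * ‖j (trh (uk - ustar))‖ ^ 2
      = (lamk - lamstar) (trh (uk - ustar)) := by
  rw [← euler_lagrange_sub Lop trh j f g γ uk ustar lamk lamstar hELk hELstar (uk - ustar),
    real_inner_self_eq_norm_sq, real_inner_self_eq_norm_sq]

/-- PINNs Lagrangian error identity (abstract formulation). `V2` plays the role of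
`H²(Ω)`, `Lop u = ℒu = −div(A∇u) + u ∈ L²(Ω)`, `trh` is the trace into `Bh = H^{3/2}(∂Ω)`
with embedding `j : Bh → L²(∂Ω)`.  If `(u*, λ*)` is a saddle point of
`L_R(u,λ) = ½‖ℒu − f‖² + (γ/2)‖u−g‖²_{L²(∂Ω)} − ⟨λ, u−g⟩` (so the Euler–Lagrange
conditions hold, and `u* = g` on `∂Ω`) and `u^k` minimizes `L_R(·, λ^k)`, then
`‖ℒ(u^k−u*)‖²_{L²(Ω)} + γ‖u^k−u*‖²_{L²(∂Ω)} = ⟨λ^k − λ*, u^k − u*⟩`. -/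
theorem pinns_lagrangian_error_identity
    (V2 L2 L2b Bh : Type*)
    [NormedAddCommGroup V2] [InnerProductSpace ℝ V2]
    [NormedAddCommGroup L2] [InnerProductSpace ℝ L2]
    [NormedAddCommGroup L2b] [InnerProductSpace ℝ L2b]
    [NormedAddCommGroup Bh] [InnerProductSpace ℝ Bh]
    (Lop : V2 →L[ℝ] L2)    -- u ↦ ℒu = −div(A∇u) + u
    (trh : V2 →L[ℝ] Bh)    -- trace operator H²(Ω) → H^{3/2}(∂Ω)
    (j : Bh →L[ℝ] L2b)     -- embedding H^{3/2}(∂Ω) ↪ L²(∂Ω)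
    (f : L2) (g : Bh) (γ : ℝ) (hγ : 0 ≤ γ)
    (ustar uk : V2) (lamstar lamk : StrongDual ℝ Bh)
    -- Euler–Lagrange conditions for the saddle point (u*, λ*)
    (hELstar : ∀ φ : V2,
      ⟪Lop ustar - f, Lop φ⟫ + γ * ⟪j (trh ustar) - j g, j (trh φ)⟫ = lamstar (trh φ))
    (hstar_bc : trh ustar = g)
    -- Euler–Lagrange conditions for u^k minimizing L_R(·, λ^k)
    (hELk : ∀ φ : V2,
      ⟪Lop uk - f, Lop φ⟫ + γ * ⟪j (trh uk) - j g, j (trh φ)⟫ = lamk (trh φ)) :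
    ‖Lop (uk - ustar)‖ ^ 2 + γ * ‖j (trh (uk - ustar))‖ ^ 2
      = (lamk - lamstar) (trh (uk - ustar)) :=
  pinns_lagrangian_error_identity_general V2 L2 L2b Bh Lop trh j f g γ ustar uk lamstar lamk hELstar
    hELk
end
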